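/- Assume additionally that Φ is convex. Then a nonempty set S ⊆ S_Φ is s-convex if and only if (0,1]·S := {tx : t ∈ (0,1], x ∈ S} is convex. -/

import Mathlib

/-!
Write `T = (0,1] • S`. Since `Φ (t • x) = t` and `ρ (t • x) = x` for `x ∈ S` and `t > 0`,
`T = {y | 0 < Φ y ≤ 1, ρ y ∈ S}`. A convex combination of `t₁ • x₁` and `t₂ • x₂` is a positive
multiple of a point of the segment `[x₁, x₂]`, so it has the same `ρ`; and convexity of `Φ` keeps
`Φ ≤ 1`. Conversely `S ⊆ T`, and `ρ` of a point of `T` lies in `S`.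
-/

open Set
open scoped RealInnerProductSpace

/-- `rho Φ x = x / Φ x` (equal to `0` when `Φ x = 0`, in particular `rho Φ 0 = 0`). -/
noncomputable def rho {n : ℕ} (Φ : EuclideanSpace ℝ (Fin n) → ℝ)
    (x : EuclideanSpace ℝ (Fin n)) : EuclideanSpace ℝ (Fin n) := (Φ x)⁻¹ • x

/-- The `Φ`-sphere `S_Φ = {x | Φ x = 1}`. -/
def sphereSet {n : ℕ} (Φ : EuclideanSpace ℝ (Fin n) → ℝ) : Set (EuclideanSpace ℝ (Fin n)) :=
  {x | Φ x = 1}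

/-- `S` is s-convex: `ρ(λx + (1-λ)y) ∈ S` for all `x, y ∈ S`, `λ ∈ [0,1]`. -/
def SConvex {n : ℕ} (Φ : EuclideanSpace ℝ (Fin n) → ℝ)
    (S : Set (EuclideanSpace ℝ (Fin n))) : Prop :=
  ∀ x ∈ S, ∀ y ∈ S, ∀ l : ℝ, l ∈ Set.Icc (0 : ℝ) 1 → rho Φ (l • x + (1 - l) • y) ∈ S

open Pointwise

theorem smul_add_smul_eq_add_smul_combo {𝕜 E : Type*} [Field 𝕜] [AddCommGroup E] [Module 𝕜 E]
    {p q : 𝕜} (h : p + q ≠ 0) (x y : E) :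
    p • x + q • y = (p + q) • ((p / (p + q)) • x + (1 - p / (p + q)) • y) := by
  have hq : 1 - p / (p + q) = q / (p + q) := by field_simp; ring
  rw [hq, smul_add, smul_smul, smul_smul, mul_div_cancel₀ _ h, mul_div_cancel₀ _ h]

section

variable {n : ℕ} {Φ : EuclideanSpace ℝ (Fin n) → ℝ} {S : Set (EuclideanSpace ℝ (Fin n))}

theorem rho_smul_of_pos (hhom : ∀ t : ℝ, 0 ≤ t → ∀ x, Φ (t • x) = t * Φ x) {t : ℝ} (ht : 0 < t)
    (x : EuclideanSpace ℝ (Fin n)) : rho Φ (t • x) = rho Φ x := by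
  rw [rho, rho, hhom t ht.le, smul_smul, mul_inv_rev, mul_assoc, inv_mul_cancel₀ ht.ne', mul_one]

theorem smul_rho_of_ne_zero {x : EuclideanSpace ℝ (Fin n)} (hx : Φ x ≠ 0) :
    Φ x • rho Φ x = x := by
  rw [rho, smul_smul, mul_inv_cancel₀ hx, one_smul]

theorem rho_of_mem_sphereSet {x : EuclideanSpace ℝ (Fin n)} (hx : x ∈ sphereSet Φ) :
    rho Φ x = x := by
  rw [rho, show Φ x = 1 from hx, inv_one, one_smul]

theorem map_ne_zero_of_rho_mem_sphereSet (hhom : ∀ t : ℝ, 0 ≤ t → ∀ x, Φ (t • x) = t * Φ x)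
    {x : EuclideanSpace ℝ (Fin n)} (hx : rho Φ x ∈ sphereSet Φ) : Φ x ≠ 0 := by
  intro h
  have hΦ0 : Φ 0 = 0 := by simpa using hhom 0 le_rfl 0
  have hρ : rho Φ x = 0 := by rw [rho, h, inv_zero, zero_smul]
  have : Φ (rho Φ x) = 1 := hx
  rw [hρ, hΦ0] at this
  exact zero_ne_one this

theorem mem_Ioc_smul_iff (hhom : ∀ t : ℝ, 0 ≤ t → ∀ x, Φ (t • x) = t * Φ x)
    (hsub : S ⊆ sphereSet Φ) {y : EuclideanSpace ℝ (Fin n)} :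
    y ∈ Ioc (0 : ℝ) 1 • S ↔ Φ y ∈ Ioc 0 1 ∧ rho Φ y ∈ S := by
  constructor
  · rintro ⟨t, ht, x, hx, rfl⟩
    have hΦx : Φ x = 1 := hsub hx
    rw [hhom t ht.1.le, hΦx, mul_one, rho_smul_of_pos hhom ht.1, rho_of_mem_sphereSet (hsub hx)]
    exact ⟨ht, hx⟩
  · rintro ⟨hy, hρ⟩
    exact ⟨Φ y, hy, rho Φ y, hρ, smul_rho_of_ne_zero hy.1.ne'⟩

theorem convex_Ioc_smul_of_sConvex (hnn : ∀ x, 0 ≤ Φ x)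
    (hhom : ∀ t : ℝ, 0 ≤ t → ∀ x, Φ (t • x) = t * Φ x) (hconv : ConvexOn ℝ univ Φ)
    (hsub : S ⊆ sphereSet Φ) (hS : SConvex Φ S) : Convex ℝ (Ioc (0 : ℝ) 1 • S) := by
  intro y₁ hy₁ y₂ hy₂ a b ha hb hab
  rw [mem_Ioc_smul_iff hhom hsub] at hy₁ hy₂ ⊢
  obtain ⟨⟨hpos₁, hle₁⟩, hρ₁⟩ := hy₁
  obtain ⟨⟨hpos₂, hle₂⟩, hρ₂⟩ := hy₂
  have hs : 0 < a * Φ y₁ + b * Φ y₂ := by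
    nlinarith [mul_nonneg ha (sub_nonneg.2 (min_le_left (Φ y₁) (Φ y₂))),
      mul_nonneg hb (sub_nonneg.2 (min_le_right (Φ y₁) (Φ y₂))), lt_min hpos₁ hpos₂]
  set s := a * Φ y₁ + b * Φ y₂
  have hl : a * Φ y₁ / s ∈ Icc (0 : ℝ) 1 :=
    ⟨by positivity, (div_le_one hs).2 (by nlinarith [mul_nonneg hb hpos₂.le])⟩
  have hρ : rho Φ (a • y₁ + b • y₂) ∈ S := by
    rw [← smul_rho_of_ne_zero hpos₁.ne', ← smul_rho_of_ne_zero hpos₂.ne', smul_smul, smul_smul,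
      smul_add_smul_eq_add_smul_combo hs.ne', rho_smul_of_pos hhom hs]
    exact hS _ hρ₁ _ hρ₂ _ hl
  have hle : Φ (a • y₁ + b • y₂) ≤ 1 :=
    calc Φ (a • y₁ + b • y₂) ≤ a * Φ y₁ + b * Φ y₂ := hconv.2 trivial trivial ha hb hab
      _ ≤ 1 := by nlinarith
  exact ⟨⟨(hnn _).lt_of_ne (map_ne_zero_of_rho_mem_sphereSet hhom (hsub hρ)).symm, hle⟩, hρ⟩

theorem sConvex_of_convex_Ioc_smul (hhom : ∀ t : ℝ, 0 ≤ t → ∀ x, Φ (t • x) = t * Φ x)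
    (hsub : S ⊆ sphereSet Φ) (hT : Convex ℝ (Ioc (0 : ℝ) 1 • S)) : SConvex Φ S := by
  have hST : S ⊆ Ioc (0 : ℝ) 1 • S := fun x hx => ⟨1, right_mem_Ioc.2 one_pos, x, hx, one_smul ℝ x⟩
  intro x hx y hy l hl
  exact ((mem_Ioc_smul_iff hhom hsub).1
    (hT (hST hx) (hST hy) hl.1 (sub_nonneg.2 hl.2) (add_sub_cancel l 1))).2

end

theorem stmt5_general {n : ℕ} (Φ : EuclideanSpace ℝ (Fin n) → ℝ)
    (hnn : ∀ x, 0 ≤ Φ x)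
    (hhom : ∀ (t : ℝ), 0 ≤ t → ∀ x, Φ (t • x) = t * Φ x)
    (hconv : ConvexOn ℝ Set.univ Φ)
    (S : Set (EuclideanSpace ℝ (Fin n))) (hsub : S ⊆ sphereSet Φ) :
    SConvex Φ S ↔ Convex ℝ {y | ∃ t : ℝ, t ∈ Set.Ioc (0 : ℝ) 1 ∧ ∃ x ∈ S, y = t • x} := by
  have hcone : {y | ∃ t : ℝ, t ∈ Ioc (0 : ℝ) 1 ∧ ∃ x ∈ S, y = t • x} = Ioc (0 : ℝ) 1 • S := by
    ext y
    simp only [mem_ofPred_eq, mem_smul, eq_comm]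
  rw [hcone]
  exact ⟨convex_Ioc_smul_of_sConvex hnn hhom hconv hsub, sConvex_of_convex_Ioc_smul hhom hsub⟩

theorem stmt5 {n : ℕ} (hn : 2 ≤ n) (Φ : EuclideanSpace ℝ (Fin n) → ℝ)
    (hc : Continuous Φ) (hnn : ∀ x, 0 ≤ Φ x)
    (hhom : ∀ (t : ℝ), 0 ≤ t → ∀ x, Φ (t • x) = t * Φ x)
    (hzero : ∀ x, Φ x = 0 ↔ x = 0)
    (hconv : ConvexOn ℝ Set.univ Φ)
    (S : Set (EuclideanSpace ℝ (Fin n))) (hne : S.Nonempty) (hsub : S ⊆ sphereSet Φ) :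
    SConvex Φ S ↔ Convex ℝ {y | ∃ t : ℝ, t ∈ Set.Ioc (0 : ℝ) 1 ∧ ∃ x ∈ S, y = t • x} :=
  stmt5_general Φ hnn hhom hconv S hsub
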